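/- arXiv:1809.04727 — 4 statements merged into one kernel-verified Lean document; each statement's English description precedes it below -/
import Mathlib

section
/- If a tree T admits a set-ordered graceful labelling f with bipartition (X,Y) (so max f(X) < min f(Y)), then the labelling f₃ defined by f₃(x)=2f(x) for x∈X and f₃(y)=2f(y)−1 for y∈Y, with induced edge labels f₃(uv)=|f₃(u)−f₃(v)|, is an odd-graceful labelling of T; that is, f₃ is injective on vertices with values in {0,…,2q−1} and the edge labels are exactly {1,3,…,2q−1}, where q is the number of edges of T. -/
/-- If a tree `T` with `q` edges admits a set-ordered graceful labelling `f` with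
bipartition `(X, Xᶜ)`, then `f₃` defined by `f₃(x) = 2f(x)` on `X` and
`f₃(y) = 2f(y) − 1` off `X` is an odd-graceful labelling: injective with values
in `{0,…,2q−1}` and the induced edge labels `|f₃(u) − f₃(v)|` are exactly the
odd numbers `{1,3,…,2q−1}`. -/
theorem stmt6 {V : Type*} [Fintype V] [DecidableEq V] (G : SimpleGraph V)
    [DecidableRel G.Adj] (hT : G.IsTree) (q : ℕ) (hq : G.edgeFinset.card = q)
    (X : Finset V) (f : V → ℕ)
    (hbip : ∀ u v, G.Adj u v → (u ∈ X ↔ v ∉ X))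
    (hinj : Function.Injective f)
    (hbound : ∀ v, f v ≤ q)
    (hso : ∀ x ∈ X, ∀ y ∉ X, f x < f y)
    (hsurj : ∀ n, 1 ≤ n → n ≤ q → ∃ u v, G.Adj u v ∧ Nat.dist (f u) (f v) = n) :
    Function.Injective (fun v => if v ∈ X then 2 * f v else 2 * f v - 1) ∧
    (∀ v, (if v ∈ X then 2 * f v else 2 * f v - 1) ≤ 2 * q - 1) ∧
    (∀ u v, G.Adj u v →
      Odd (Nat.dist (if u ∈ X then 2 * f u else 2 * f u - 1)
                    (if v ∈ X then 2 * f v else 2 * f v - 1)) ∧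
      Nat.dist (if u ∈ X then 2 * f u else 2 * f u - 1)
               (if v ∈ X then 2 * f v else 2 * f v - 1) ≤ 2 * q - 1) ∧
    (∀ n, Odd n → n ≤ 2 * q - 1 → ∃ u v, G.Adj u v ∧
      Nat.dist (if u ∈ X then 2 * f u else 2 * f u - 1)
               (if v ∈ X then 2 * f v else 2 * f v - 1) = n) := by
  have hdist : ∀ a b : ℕ, Nat.dist a b = (a - b) + (b - a) := fun a b => rfl
  have hy : 1 ≤ q → ∃ y, y ∉ X := by
    intro h
    obtain ⟨u, v, huv, _⟩ := hsurj 1 le_rfl h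
    by_cases hu : u ∈ X
    · exact ⟨v, (hbip u v huv).mp hu⟩
    · exact ⟨u, hu⟩
  refine ⟨?_, ?_, ?_, ?_⟩
  · intro a b hab
    simp only at hab
    by_cases ha : a ∈ X <;> by_cases hb : b ∈ X <;>
      simp only [ha, hb, if_true, if_false] at hab
    · exact hinj (by omega)
    · have := hso a ha b hb; omega
    · have := hso b hb a ha; omega
    · exact hinj (by omega)
  · intro v
    by_cases hv : v ∈ X <;> simp only [hv, if_true, if_false]
    · rcases Nat.eq_zero_or_pos q with h | h
      · have := hbound v; omega
      · obtain ⟨y, hy'⟩ := hy h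
        have := hso v hv y hy'
        have := hbound y
        omega
    · have := hbound v; omega
  · intro u v huv
    by_cases hu : u ∈ X
    · have hv : v ∉ X := (hbip u v huv).mp hu
      have h1 := hso u hu v hv
      have h2 := hbound v
      simp only [hu, hv, if_true, if_false, hdist]
      constructor
      · exact ⟨f v - f u - 1, by omega⟩
      · omega
    · have hv : v ∈ X := by
        by_contra hv
        exact hu ((hbip u v huv).mpr hv)
      have h1 := hso v hv u hu
      have h2 := hbound u
      simp only [hu, hv, if_true, if_false, hdist]
      constructor
      · exact ⟨f u - f v - 1, by omega⟩
      · omega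
  · intro n hodd hn
    obtain ⟨m, hm⟩ := hodd
    have hq1 : 1 ≤ q := by
      rcases Nat.eq_zero_or_pos q with h | h
      · omega
      · exact h
    obtain ⟨u, v, huv, hd⟩ := hsurj (m + 1) (by omega) (by omega)
    rw [hdist] at hd
    by_cases hu : u ∈ X
    · have hv : v ∉ X := (hbip u v huv).mp hu
      have h1 := hso u hu v hv
      refine ⟨u, v, huv, ?_⟩
      simp only [hu, hv, if_true, if_false, hdist]
      omega
    · have hv : v ∈ X := by
        by_contra hv
        exact hu ((hbip u v huv).mpr hv)
      have h1 := hso v hv u hu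
      refine ⟨u, v, huv, ?_⟩
      simp only [hu, hv, if_true, if_false, hdist]
      omega
end

section
/- If a tree T with p vertices admits a set-ordered graceful labelling f, then T admits another set-ordered graceful labelling g such that f and g are a pair of image-labellings: for every edge uv, f(uv) + g(uv) = p, where edge labels are induced by absolute differences. -/
/-- If a tree `T` with `p` vertices admits a set-ordered graceful labelling `f`
(with bipartition `(X, Xᶜ)`), then it admits another set-ordered graceful labelling
`g` such that `f` and `g` are a pair of image-labellings:
`|f(u)−f(v)| + |g(u)−g(v)| = p` for every edge `uv`. -/
theorem stmt7 {V : Type*} [Fintype V] [DecidableEq V] (G : SimpleGraph V)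
    [DecidableRel G.Adj] (hT : G.IsTree) (p : ℕ) (hp : Fintype.card V = p)
    (X : Finset V) (f : V → ℕ)
    (hbip : ∀ u v, G.Adj u v → (u ∈ X ↔ v ∉ X))
    (hinj : Function.Injective f)
    (hbound : ∀ v, f v ≤ p - 1)
    (hso : ∀ x ∈ X, ∀ y ∉ X, f x < f y)
    (hsurj : ∀ n, 1 ≤ n → n ≤ p - 1 → ∃ u v, G.Adj u v ∧ Nat.dist (f u) (f v) = n) :
    ∃ g : V → ℕ,
      Function.Injective g ∧
      (∀ v, g v ≤ p - 1) ∧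
      (∀ x ∈ X, ∀ y ∉ X, g x < g y) ∧
      (∀ n, 1 ≤ n → n ≤ p - 1 → ∃ u v, G.Adj u v ∧ Nat.dist (g u) (g v) = n) ∧
      (∀ u v, G.Adj u v → Nat.dist (f u) (f v) + Nat.dist (g u) (g v) = p) := by
  by_cases hE : ∃ u v, G.Adj u v
  · obtain ⟨u₀, v₀, huv₀⟩ := hE
    have hX : X.Nonempty := by
      have h := hbip u₀ v₀ huv₀
      by_cases hu : u₀ ∈ X
      · exact ⟨u₀, hu⟩
      · exact ⟨v₀, by tauto⟩
    have hp2 : 2 ≤ p := by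
      have : 1 < Fintype.card V := Fintype.one_lt_card_iff.mpr ⟨u₀, v₀, huv₀.ne⟩
      omega
    set s := (X.image f).max' (hX.image f) with hs_def
    have hle : ∀ x ∈ X, f x ≤ s := fun x hx =>
      Finset.le_max' _ _ (Finset.mem_image_of_mem f hx)
    obtain ⟨x₀, hx₀, hfx₀⟩ := Finset.mem_image.mp ((X.image f).max'_mem (hX.image f))
    rw [← hs_def] at hfx₀
    have hgt : ∀ y, y ∉ X → s < f y := fun y hy => hfx₀ ▸ hso x₀ hx₀ y hy
    have hs : s ≤ p - 1 := hfx₀ ▸ hbound x₀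
    set g : V → ℕ := fun v => if v ∈ X then s - f v else p + s - f v with hg_def
    have hkey : ∀ u v, G.Adj u v → Nat.dist (f u) (f v) + Nat.dist (g u) (g v) = p := by
      intro u v huv
      have hb := hbip u v huv
      have hfu := hbound u
      have hfv := hbound v
      by_cases hu : u ∈ X
      · have hv : v ∉ X := hb.mp hu
        have h1 := hle u hu
        have h2 := hgt v hv
        simp only [hg_def, if_pos hu, if_neg hv, Nat.dist]
        omega
      · have hv : v ∈ X := by tauto
        have h1 := hle v hv
        have h2 := hgt u hu
        simp only [hg_def, if_pos hv, if_neg hu, Nat.dist]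
        omega
    refine ⟨g, ?_, ?_, ?_, ?_, hkey⟩
    · intro a b hab
      have ha := hbound a
      have hb := hbound b
      apply hinj
      by_cases haX : a ∈ X <;> by_cases hbX : b ∈ X
      · have := hle a haX; have := hle b hbX
        simp only [hg_def, if_pos haX, if_pos hbX] at hab; omega
      · have := hle a haX; have := hgt b hbX
        simp only [hg_def, if_pos haX, if_neg hbX] at hab; omega
      · have := hgt a haX; have := hle b hbX
        simp only [hg_def, if_neg haX, if_pos hbX] at hab; omega
      · have := hgt a haX; have := hgt b hbX
        simp only [hg_def, if_neg haX, if_neg hbX] at hab; omega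
    · intro v
      have := hbound v
      by_cases hv : v ∈ X
      · have := hle v hv; simp only [hg_def, if_pos hv]; omega
      · have := hgt v hv; simp only [hg_def, if_neg hv]; omega
    · intro x hx y hy
      have h1 := hle x hx
      have h2 := hgt y hy
      have h3 := hbound y
      simp only [hg_def, if_pos hx, if_neg hy]
      omega
    · intro n h1 h2
      obtain ⟨u, v, huv, hd⟩ := hsurj (p - n) (by omega) (by omega)
      exact ⟨u, v, huv, by have := hkey u v huv; omega⟩
  · exact ⟨f, hinj, hbound, hso, hsurj, fun u v huv => absurd ⟨u, v, huv⟩ hE⟩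
end

section
/- If two trees T₁ and T₂, each with p vertices, both admit set-ordered graceful labellings, then there exist an edge-magic graceful labelling g₁ of T₁ with g₁(V(T₁))={1,…,p}, g₁(E(T₁))={p+1,…,2p−1}, and a labelling h₂ of T₂ with h₂(E(T₂))={1,…,p−1}, h₂(V(T₂))={p,…,2p−1}, such that g₁(V(T₁))∖{p} = h₂(E(T₂)) and g₁(E(T₁)) = h₂(V(T₂))∖{p}; i.e., T₁ and T₂ are reciprocal-inverse matchings of each other. -/
/-- `G` admits a set-ordered graceful labelling (for a graph with `p` vertices):
an injective vertex labelling into `{0,…,p−1}`, with a bipartition part `X` such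
that every edge crosses, `max f(X) < min f(Xᶜ)`, and the induced absolute-difference
edge labels exhaust `{1,…,p−1}`. -/
def HasSetOrderedGraceful {V : Type*} (G : SimpleGraph V) (p : ℕ) : Prop :=
  ∃ (X : Finset V) (f : V → ℕ),
    Function.Injective f ∧ (∀ v, f v ≤ p - 1) ∧
    (∀ u v, G.Adj u v → (u ∈ X ↔ v ∉ X)) ∧
    (∀ x ∈ X, ∀ y ∉ X, f x < f y) ∧
    (∀ n, 1 ≤ n → n ≤ p - 1 → ∃ u v, G.Adj u v ∧ Nat.dist (f u) (f v) = n)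

section Aux

private lemma aux_image_range {V : Type*} [Fintype V] (f : V → ℕ) (p : ℕ) (hp : 1 ≤ p)
    (hinj : Function.Injective f) (hle : ∀ v, f v ≤ p - 1) (hcard : Fintype.card V = p) :
    Finset.univ.image f = Finset.range p := by
  apply Finset.eq_of_subset_of_card_le
  · intro n hn
    simp only [Finset.mem_image, Finset.mem_univ, true_and] at hn
    obtain ⟨v, rfl⟩ := hn
    have := hle v
    simp only [Finset.mem_range]
    omega
  · rw [Finset.card_range, Finset.card_image_of_injective _ hinj, Finset.card_univ, hcard]

private lemma aux_bounds {V : Type*} [Fintype V] [DecidableEq V] (f : V → ℕ) (X : Finset V)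
    (p : ℕ) (hp : 1 ≤ p) (hinj : Function.Injective f) (hle : ∀ v, f v ≤ p - 1)
    (hcard : Fintype.card V = p) (hord : ∀ x ∈ X, ∀ y ∉ X, f x < f y) :
    (∀ x ∈ X, f x < X.card) ∧ (∀ y ∉ X, X.card ≤ f y) := by
  have hrange := aux_image_range f p hp hinj hle hcard
  have hXp : X.card ≤ p := by
    calc X.card ≤ Fintype.card V := Finset.card_le_univ X
    _ = p := hcard
  constructor
  · intro x hx
    have sub : Finset.range (f x + 1) ⊆ X.image f := by
      intro t ht
      simp only [Finset.mem_range] at ht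
      have htp : t ∈ Finset.range p := by
        have := hle x; simp only [Finset.mem_range]; omega
      rw [← hrange] at htp
      simp only [Finset.mem_image, Finset.mem_univ, true_and] at htp
      obtain ⟨w, hw⟩ := htp
      by_cases hwX : w ∈ X
      · exact Finset.mem_image.mpr ⟨w, hwX, hw⟩
      · exfalso; have := hord x hx w hwX; omega
    have := Finset.card_le_card sub
    rw [Finset.card_range, Finset.card_image_of_injective _ hinj] at this
    omega
  · intro y hy
    have sub : Finset.Icc (f y) (p - 1) ⊆ (Finset.univ \ X).image f := by
      intro t ht
      simp only [Finset.mem_Icc] at ht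
      have htp : t ∈ Finset.range p := by simp only [Finset.mem_range]; omega
      rw [← hrange] at htp
      simp only [Finset.mem_image, Finset.mem_univ, true_and] at htp
      obtain ⟨w, hw⟩ := htp
      by_cases hwX : w ∈ X
      · exfalso; have := hord w hwX y hy; omega
      · exact Finset.mem_image.mpr ⟨w, by simp [hwX], hw⟩
    have hc := Finset.card_le_card sub
    rw [Nat.card_Icc, Finset.card_image_of_injective _ hinj,
      Finset.card_sdiff_of_subset (Finset.subset_univ X), Finset.card_univ, hcard] at hc
    have := hle y
    omega

end Aux

/-- If two trees `T₁`, `T₂` with `p` vertices both admit set-ordered graceful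
labellings, then there are an edge-magic graceful (total) labelling `(gV, gE)` of `T₁`
with vertex labels `{1,…,p}` and edge labels `{p+1,…,2p−1}`, and a total labelling
`(hV, hE)` of `T₂` with edge labels `{1,…,p−1}` and vertex labels `{p,…,2p−1}`, such
that `gV(V₁) ∖ {p} = hE(E₂)` and `gE(E₁) = hV(V₂) ∖ {p}`: they are
reciprocal-inverse matchings of each other. -/
theorem stmt9 {V₁ V₂ : Type*} [Fintype V₁] [DecidableEq V₁] [Fintype V₂] [DecidableEq V₂]
    (G₁ : SimpleGraph V₁) (G₂ : SimpleGraph V₂) [DecidableRel G₁.Adj] [DecidableRel G₂.Adj]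
    (h₁ : G₁.IsTree) (h₂ : G₂.IsTree) (p : ℕ)
    (hp₁ : Fintype.card V₁ = p) (hp₂ : Fintype.card V₂ = p)
    (hg₁ : HasSetOrderedGraceful G₁ p) (hg₂ : HasSetOrderedGraceful G₂ p) :
    ∃ (gV : V₁ → ℕ) (gE : Sym2 V₁ → ℕ) (hV : V₂ → ℕ) (hE : Sym2 V₂ → ℕ) (c : ℕ),
      (∀ u v, G₁.Adj u v → gV u + gE s(u, v) + gV v = c) ∧
      Finset.univ.image gV = Finset.Icc 1 p ∧
      G₁.edgeFinset.image gE = Finset.Icc (p + 1) (2 * p - 1) ∧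
      G₂.edgeFinset.image hE = Finset.Icc 1 (p - 1) ∧
      Finset.univ.image hV = Finset.Icc p (2 * p - 1) ∧
      (Finset.univ.image gV).erase p = G₂.edgeFinset.image hE ∧
      G₁.edgeFinset.image gE = (Finset.univ.image hV).erase p := by
  classical
  obtain ⟨X, f, hf_inj, hf_le, hf_cross, hf_ord, hf_surj⟩ := hg₁
  obtain ⟨Y, f₂, hf2_inj, hf2_le, hf2_cross, hf2_ord, hf2_surj⟩ := hg₂
  have hne₂ : Nonempty V₂ := h₂.isConnected.nonempty
  have hp : 1 ≤ p := by rw [← hp₂]; exact Fintype.card_pos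
  by_cases hp1 : p = 1
  · -- degenerate case: a single vertex, no edges
    subst hp1
    have hsub₁ : Subsingleton V₁ := Fintype.card_le_one_iff_subsingleton.mp (by omega)
    have hne₁ : Nonempty V₁ := Fintype.card_pos_iff.mp (by omega)
    have hE₁ : G₁.edgeFinset = ∅ := by
      ext e
      induction e using Sym2.ind with
      | _ u v =>
        simp only [SimpleGraph.mem_edgeFinset, SimpleGraph.mem_edgeSet,
          Finset.notMem_empty, iff_false]
        intro h
        exact h.ne (Subsingleton.elim u v)
    have hsub₂ : Subsingleton V₂ := Fintype.card_le_one_iff_subsingleton.mp (by omega)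
    have hE₂ : G₂.edgeFinset = ∅ := by
      ext e
      induction e using Sym2.ind with
      | _ u v =>
        simp only [SimpleGraph.mem_edgeFinset, SimpleGraph.mem_edgeSet,
          Finset.notMem_empty, iff_false]
        intro h
        exact h.ne (Subsingleton.elim u v)
    refine ⟨fun _ => 1, fun _ => 0, fun _ => 1, fun _ => 0, 0, ?_, ?_, ?_, ?_, ?_, ?_, ?_⟩
    · intro u v h; exact absurd (Subsingleton.elim u v) h.ne
    · rw [Finset.image_const Finset.univ_nonempty]; simp
    · rw [hE₁]; simp
    · rw [hE₂]; simp
    · rw [Finset.image_const Finset.univ_nonempty]; simp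
    · rw [Finset.image_const Finset.univ_nonempty, hE₂]; simp
    · rw [Finset.image_const Finset.univ_nonempty, hE₁]; simp
  · have hp2 : 2 ≤ p := by omega
    obtain ⟨hXlt, hXge⟩ := aux_bounds f X p hp hf_inj hf_le hp₁ hf_ord
    have hXp : X.card ≤ p := by
      calc X.card ≤ Fintype.card V₁ := Finset.card_le_univ X
      _ = p := hp₁
    set s := X.card with hs
    set gV : V₁ → ℕ := fun v => if v ∈ X then f v + 1 else p + s - f v with hgV
    set gE : Sym2 V₁ → ℕ :=
      fun e => p + Sym2.lift ⟨fun a b => Nat.dist (f a) (f b), fun a b => Nat.dist_comm _ _⟩ e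
      with hgE
    set hVf : V₂ → ℕ := fun v => f₂ v + p with hhV
    set hEf : Sym2 V₂ → ℕ :=
      fun e => Sym2.lift ⟨fun a b => Nat.dist (f₂ a) (f₂ b), fun a b => Nat.dist_comm _ _⟩ e
      with hhE
    have hgE_mk : ∀ u v, gE s(u, v) = p + Nat.dist (f u) (f v) := fun u v => rfl
    have hhE_mk : ∀ u v, hEf s(u, v) = Nat.dist (f₂ u) (f₂ v) := fun u v => rfl
    -- injectivity of gV
    have hgV_inj : Function.Injective gV := by
      intro a b hab
      simp only [hgV] at hab
      by_cases ha : a ∈ X <;> by_cases hb : b ∈ X <;>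
        simp only [ha, hb, if_true, if_false] at hab
      · exact hf_inj (by omega)
      · have h1 := hXlt a ha; have h2 := hXge b hb; have h3 := hf_le b; omega
      · have h1 := hXlt b hb; have h2 := hXge a ha; have h3 := hf_le a; omega
      · have h1 := hXge a ha; have h2 := hXge b hb
        have h3 := hf_le a; have h4 := hf_le b
        exact hf_inj (by omega)
    have himgV : Finset.univ.image gV = Finset.Icc 1 p := by
      apply Finset.eq_of_subset_of_card_le
      · intro n hn
        simp only [Finset.mem_image, Finset.mem_univ, true_and] at hn
        obtain ⟨v, rfl⟩ := hn
        simp only [hgV, Finset.mem_Icc]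
        by_cases hv : v ∈ X <;> simp only [hv, if_true, if_false]
        · have := hXlt v hv; omega
        · have h1 := hXge v hv; have h2 := hf_le v; omega
      · rw [Nat.card_Icc, Finset.card_image_of_injective _ hgV_inj, Finset.card_univ, hp₁]
        omega
    have himgE : G₁.edgeFinset.image gE = Finset.Icc (p + 1) (2 * p - 1) := by
      apply Finset.Subset.antisymm
      · intro n hn
        simp only [Finset.mem_image] at hn
        obtain ⟨e, he, rfl⟩ := hn
        induction e using Sym2.ind with
        | _ u v =>
          rw [SimpleGraph.mem_edgeFinset, SimpleGraph.mem_edgeSet] at he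
          rw [hgE_mk]
          have hne : f u ≠ f v := fun h => he.ne (hf_inj h)
          have h1 := hf_le u; have h2 := hf_le v
          simp only [Nat.dist, Finset.mem_Icc]
          omega
      · intro n hn
        simp only [Finset.mem_Icc] at hn
        obtain ⟨u, v, hadj, hd⟩ := hf_surj (n - p) (by omega) (by omega)
        simp only [Finset.mem_image]
        refine ⟨s(u, v), by rw [SimpleGraph.mem_edgeFinset, SimpleGraph.mem_edgeSet]; exact hadj, ?_⟩
        rw [hgE_mk, hd]
        omega
    have himhE : G₂.edgeFinset.image hEf = Finset.Icc 1 (p - 1) := by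
      apply Finset.Subset.antisymm
      · intro n hn
        simp only [Finset.mem_image] at hn
        obtain ⟨e, he, rfl⟩ := hn
        induction e using Sym2.ind with
        | _ u v =>
          rw [SimpleGraph.mem_edgeFinset, SimpleGraph.mem_edgeSet] at he
          rw [hhE_mk]
          have hne : f₂ u ≠ f₂ v := fun h => he.ne (hf2_inj h)
          have h1 := hf2_le u; have h2 := hf2_le v
          simp only [Nat.dist, Finset.mem_Icc]
          omega
      · intro n hn
        simp only [Finset.mem_Icc] at hn
        obtain ⟨u, v, hadj, hd⟩ := hf2_surj n (by omega) (by omega)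
        simp only [Finset.mem_image]
        exact ⟨s(u, v), by rw [SimpleGraph.mem_edgeFinset, SimpleGraph.mem_edgeSet]; exact hadj,
          by rw [hhE_mk, hd]⟩
    have himhV : Finset.univ.image hVf = Finset.Icc p (2 * p - 1) := by
      apply Finset.eq_of_subset_of_card_le
      · intro n hn
        simp only [Finset.mem_image, Finset.mem_univ, true_and] at hn
        obtain ⟨v, rfl⟩ := hn
        have := hf2_le v
        simp only [hhV, Finset.mem_Icc]
        omega
      · have hinj : Function.Injective hVf := fun a b hab => hf2_inj (by
          simp only [hhV] at hab; omega)
        rw [Nat.card_Icc, Finset.card_image_of_injective _ hinj, Finset.card_univ, hp₂]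
        omega
    refine ⟨gV, gE, hVf, hEf, 2 * p + s + 1, ?_, himgV, himgE, himhE, himhV, ?_, ?_⟩
    · intro u v hadj
      have hcross := hf_cross u v hadj
      rw [hgE_mk]
      simp only [hgV, Nat.dist]
      by_cases hu : u ∈ X
      · have hv : v ∉ X := hcross.mp hu
        have hlt := hf_ord u hu v hv
        have h1 := hf_le v
        simp only [hu, hv, if_true, if_false]
        omega
      · have hv : v ∈ X := by
          by_contra hv
          exact hu (hcross.mpr hv)
        have hlt := hf_ord v hv u hu
        have h1 := hf_le u
        simp only [hu, hv, if_true, if_false]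
        omega
    · rw [himgV, himhE]
      ext n
      simp only [Finset.mem_erase, Finset.mem_Icc]
      omega
    · rw [himgE, himhV]
      ext n
      simp only [Finset.mem_erase, Finset.mem_Icc]
      omega
end

section
/- Let T be a tree with p vertices and bipartition (X,Y). If T admits a set-ordered graceful labelling f (with max f(X) < min f(Y)), then T admits an odd-elegant labelling η : V(T) → {0,…,2p−3} with induced edge labels η(uv) = η(u)+η(v) (mod 2p−2) forming exactly the odd set {1,3,…,2p−3}, and moreover η(u)+η(v) ≤ 2p−3 for every edge uv. -/
/-- If a tree `T` with `p` vertices admits a set-ordered graceful labelling `f` with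
bipartition `(X, Xᶜ)`, then `T` admits an odd-elegant labelling
`η : V(T) → {0,…,2p−3}` whose induced edge labels `η(u)+η(v) (mod 2p−2)` are exactly
the odd numbers `{1,3,…,2p−3}`, and moreover `η(u)+η(v) ≤ 2p−3` on every edge. -/
theorem stmt19 {V : Type*} [Fintype V] [DecidableEq V] (G : SimpleGraph V)
    [DecidableRel G.Adj] (hT : G.IsTree) (p : ℕ) (hp : Fintype.card V = p) (hp2 : 2 ≤ p)
    (X : Finset V) (f : V → ℕ)
    (hbip : ∀ u v, G.Adj u v → (u ∈ X ↔ v ∉ X))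
    (hinj : Function.Injective f)
    (hbound : ∀ v, f v ≤ p - 1)
    (hso : ∀ x ∈ X, ∀ y ∉ X, f x < f y)
    (hsurj : ∀ n, 1 ≤ n → n ≤ p - 1 → ∃ u v, G.Adj u v ∧ Nat.dist (f u) (f v) = n) :
    ∃ η : V → ℕ,
      Function.Injective η ∧ (∀ v, η v ≤ 2 * p - 3) ∧
      (∀ u v, G.Adj u v → η u + η v ≤ 2 * p - 3) ∧
      (∀ u v, G.Adj u v → Odd ((η u + η v) % (2 * p - 2))) ∧
      (∀ n, Odd n → n ≤ 2 * p - 3 →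
        ∃ u v, G.Adj u v ∧ (η u + η v) % (2 * p - 2) = n) := by
  -- there is at least one edge (use hsurj with n = 1)
  obtain ⟨u0, v0, hadj0, -⟩ := hsurj 1 le_rfl (by omega)
  -- get x0 ∈ X and y0 ∉ X
  obtain ⟨x0, y0, hx0, hy0⟩ : ∃ x y, x ∈ X ∧ y ∉ X := by
    by_cases h : u0 ∈ X
    · exact ⟨u0, v0, h, ((hbip u0 v0 hadj0).mp h)⟩
    · refine ⟨v0, u0, ?_, h⟩
      by_contra hv
      exact h (((hbip u0 v0 hadj0)).mpr hv)
  have hXle : ∀ x ∈ X, f x ≤ p - 2 := fun x hx => by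
    have h1 := hso x hx y0 hy0
    have h2 := hbound y0
    omega
  have hYge : ∀ y, y ∉ X → 1 ≤ f y := fun y hy => by
    have := hso x0 hx0 y hy
    omega
  refine ⟨fun v => if v ∈ X then 2 * f v else 2 * (p - 1 - f v) + 1, ?_, ?_, ?_, ?_, ?_⟩
  · -- injective
    intro a b hab
    by_cases ha : a ∈ X <;> by_cases hb : b ∈ X <;> simp [ha, hb] at hab
    · exact hinj hab
    · omega
    · omega
    · have h1 := hbound a; have h2 := hbound b
      exact hinj (by omega)
  · -- vertex bound
    intro v
    by_cases hv : v ∈ X <;> simp [hv]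
    · have := hXle v hv; omega
    · have := hYge v hv; omega
  · -- edge sum bound
    intro u v huv
    by_cases hu : u ∈ X
    · have hv : v ∉ X := (hbip u v huv).mp hu
      have h1 := hso u hu v hv
      have h2 := hbound v
      simp [hu, hv]; omega
    · have hv : v ∈ X := by
        by_contra hv; exact hu ((hbip u v huv).mpr hv)
      have h1 := hso v hv u hu
      have h2 := hbound u
      simp [hu, hv]; omega
  · -- oddness
    intro u v huv
    have key : ∃ k, (if u ∈ X then 2 * f u else 2 * (p - 1 - f u) + 1)
        + (if v ∈ X then 2 * f v else 2 * (p - 1 - f v) + 1) = 2 * k + 1 ∧ k ≤ p - 2 := by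
      by_cases hu : u ∈ X
      · have hv : v ∉ X := (hbip u v huv).mp hu
        have h1 := hso u hu v hv
        have h2 := hbound v
        simp only [if_pos hu, if_neg hv]
        exact ⟨f u + (p - 1 - f v), by ring, by omega⟩
      · have hv : v ∈ X := by
          by_contra hv; exact hu ((hbip u v huv).mpr hv)
        have h1 := hso v hv u hu
        have h2 := hbound u
        simp only [if_neg hu, if_pos hv]
        exact ⟨f v + (p - 1 - f u), by ring, by omega⟩
    obtain ⟨k, hk, hk2⟩ := key
    rw [hk, Nat.mod_eq_of_lt (by omega)]
    exact ⟨k, by ring⟩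
  · -- surjectivity onto odd labels
    intro n hn hn2
    obtain ⟨k, hk⟩ := hn
    have hd : 1 ≤ p - 1 - k ∧ p - 1 - k ≤ p - 1 := by omega
    obtain ⟨u, v, huv, hdist⟩ := hsurj (p - 1 - k) hd.1 hd.2
    rw [Nat.dist] at hdist
    by_cases hu : u ∈ X
    · have hv : v ∉ X := (hbip u v huv).mp hu
      have h1 := hso u hu v hv
      have h2 := hbound v
      refine ⟨u, v, huv, ?_⟩
      simp only [if_pos hu, if_neg hv]
      have : 2 * f u + (2 * (p - 1 - f v) + 1) = n := by omega
      rw [this, Nat.mod_eq_of_lt (by omega)]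
    · have hv : v ∈ X := by
        by_contra hv; exact hu ((hbip u v huv).mpr hv)
      have h1 := hso v hv u hu
      have h2 := hbound u
      refine ⟨u, v, huv, ?_⟩
      simp only [if_neg hu, if_pos hv]
      have : 2 * (p - 1 - f u) + 1 + 2 * f v = n := by omega
      rw [this, Nat.mod_eq_of_lt (by omega)]
end
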